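/- Fix N ≥ 1, M ≥ 1 and ε = (ε₀,…,ε_{N−1}) ∈ {0,1}^N, and work over a field. Suppose that for each s = t, t+1, …, t+M−1 the Lax equation L₁^{(s+1)} L₂^{(s+1)} R^{(s+M)} = R^{(s)} L₁^{(s)} L₂^{(s)} holds, where R^{(s)} = R(q^{(s)}) and L₁^{(s)}, L₂^{(s)} are built from parameters e^{(s)} as in the context. Define X^{(s)} = L₁^{(s)} L₂^{(s)} R^{(s+M−1)} R^{(s+M−2)} ⋯ R^{(s)}. Then X^{(t+M)} = (L₁^{(t)} L₂^{(t)})^{−1} X^{(t)} L₁^{(t)} L₂^{(t)}; in particular X^{(t+M)} and X^{(t)} have the same characteristic polynomial, so the characteristic polynomial of X^{(t)} is a conserved quantity of the discrete hungry elementary Toda orbits. -/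

import Mathlib

/-- `R(q)`: upper bidiagonal matrix with diagonal `q₀,…,q_{N-1}` and superdiagonal `1`. -/
def Rm {F : Type*} [Field F] (N : ℕ) (q : ℕ → F) : Matrix (Fin N) (Fin N) F :=
  Matrix.of fun a b => if (a : ℕ) = (b : ℕ) then q a
    else if (b : ℕ) = (a : ℕ) + 1 then 1 else 0

/-- `L₁`: the inverse of `I - Σ_{a=1}^{N-1} ε_{a-1} e_{a-1} E_{a+1,a}`. -/
noncomputable def L1m {F : Type*} [Field F] (N : ℕ) (ε : ℕ → F) (e : ℕ → F) :
    Matrix (Fin N) (Fin N) F :=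
  (1 - Matrix.of fun a b : Fin N =>
    if (a : ℕ) = (b : ℕ) + 1 then ε b * e b else 0)⁻¹

/-- `L₂ = I + Σ_{a=1}^{N-1} (1-ε_{a-1}) e_{a-1} E_{a+1,a}`. -/
def L2m {F : Type*} [Field F] (N : ℕ) (ε : ℕ → F) (e : ℕ → F) :
    Matrix (Fin N) (Fin N) F :=
  1 + Matrix.of fun a b : Fin N =>
    if (a : ℕ) = (b : ℕ) + 1 then (1 - ε b) * e b else 0

/-- `X^{(s)} = L₁^{(s)} L₂^{(s)} R^{(s+M-1)} R^{(s+M-2)} ⋯ R^{(s)}`. -/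
noncomputable def Xm {F : Type*} [Field F] (N M : ℕ) (ε : ℕ → F) (q e : ℕ → ℕ → F)
    (s : ℕ) : Matrix (Fin N) (Fin N) F :=
  (List.range M).foldl (fun A j => A * Rm N (q (s + (M - 1 - j))))
    (L1m N ε (e s) * L2m N ε (e s))

/-! Write `P s = L₁^{(s)} L₂^{(s)}` and `D s = R^{(s+M-1)} ⋯ R^{(s)}`, so that
`X^{(s)} = P s * D s`. Pushing `P` through the product one factor at a time with the Lax
equations telescopes to `P (t + M) * D (t + M) = D t * P t`. Hence `X^{(t+M)} = D t * P t`
while `X^{(t)} = P t * D t`; `P t` is invertible (both factors are unipotent lower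
triangular), and `AB`, `BA` always share their characteristic polynomial. -/

open Matrix

section DescProd

variable {G : Type*} [Monoid G]

def descProd (R : ℕ → G) (s : ℕ) : ℕ → G
  | 0 => 1
  | k + 1 => R (s + k) * descProd R s k

theorem foldl_range_mul_eq_mul_descProd (R : ℕ → G) (s k : ℕ) (B : G) :
    (List.range k).foldl (fun A j => A * R (s + (k - 1 - j))) B = B * descProd R s k := by
  induction k generalizing B with
  | zero => simp [descProd]
  | succ k ih =>
    rw [List.range_succ_eq_map, List.foldl_cons, List.foldl_map, descProd, ← mul_assoc, ← ih]
    congr 1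
    funext A j
    congr 3
    omega

theorem mul_descProd_eq_descProd_mul (P R : ℕ → G) (t m k : ℕ)
    (h : ∀ s, t ≤ s → s < t + k → P (s + 1) * R (s + m) = R s * P s) :
    P (t + k) * descProd R (t + m) k = descProd R t k * P t := by
  induction k with
  | zero => simp [descProd]
  | succ k ih =>
    have hstep := h (t + k) (Nat.le_add_right t k) (by omega)
    calc P (t + (k + 1)) * descProd R (t + m) (k + 1)
        = (P (t + k + 1) * R (t + k + m)) * descProd R (t + m) k := by
          rw [descProd, ← mul_assoc, Nat.add_right_comm t m k, ← Nat.add_assoc]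
      _ = R (t + k) * (P (t + k) * descProd R (t + m) k) := by rw [hstep, mul_assoc]
      _ = descProd R t (k + 1) * P t := by
          rw [ih fun s h₁ h₂ => h s h₁ (by omega), descProd, mul_assoc]

end DescProd

section Subdiagonal

variable {R : Type*} [CommRing R]

/-- The matrix `Σ_{a=1}^{N-1} g_{a-1} E_{a+1,a}`. -/
def subdiag (N : ℕ) (g : ℕ → R) : Matrix (Fin N) (Fin N) R :=
  of fun a b => if (a : ℕ) = (b : ℕ) + 1 then g b else 0

theorem subdiag_isLowerTriangular (N : ℕ) (g : ℕ → R) : (subdiag N g).IsLowerTriangular := by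
  intro a b hab
  have : (a : ℕ) < b := hab
  simp [subdiag, show (a : ℕ) ≠ b + 1 by omega]

theorem subdiag_apply_self (N : ℕ) (g : ℕ → R) (a : Fin N) : subdiag N g a a = 0 := by
  simp [subdiag]

theorem det_eq_one_of_isLowerTriangular {n : Type*} [Fintype n] [LinearOrder n]
    {A : Matrix n n R} (hA : A.IsLowerTriangular) (hdiag : ∀ i, A i i = 1) : A.det = 1 := by
  simp [det_of_isLowerTriangular A hA, hdiag]

theorem det_one_add_subdiag (N : ℕ) (g : ℕ → R) : (1 + subdiag N g).det = 1 :=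
  det_eq_one_of_isLowerTriangular (blockTriangular_one.add (subdiag_isLowerTriangular N g))
    fun a => by simp [subdiag_apply_self]

theorem det_one_sub_subdiag (N : ℕ) (g : ℕ → R) : (1 - subdiag N g).det = 1 :=
  det_eq_one_of_isLowerTriangular (blockTriangular_one.sub (subdiag_isLowerTriangular N g))
    fun a => by simp [subdiag_apply_self]

end Subdiagonal

theorem isUnit_L1m {F : Type*} [Field F] (N : ℕ) (ε e : ℕ → F) : IsUnit (L1m N ε e) := by
  rw [L1m, isUnit_nonsing_inv_iff, isUnit_iff_isUnit_det]
  exact (det_one_sub_subdiag N fun i => ε i * e i).symm ▸ isUnit_one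

theorem isUnit_L2m {F : Type*} [Field F] (N : ℕ) (ε e : ℕ → F) : IsUnit (L2m N ε e) := by
  rw [L2m, isUnit_iff_isUnit_det]
  exact (det_one_add_subdiag N fun i => (1 - ε i) * e i).symm ▸ isUnit_one

theorem stmt_5 {F : Type*} [Field F] (N M : ℕ)
    (ε : ℕ → F)
    (q e : ℕ → ℕ → F) (t : ℕ)
    (hLax : ∀ s, t ≤ s → s ≤ t + M - 1 →
      L1m N ε (e (s + 1)) * L2m N ε (e (s + 1)) * Rm N (q (s + M))
        = Rm N (q s) * (L1m N ε (e s) * L2m N ε (e s))) :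
    Xm N M ε q e (t + M)
        = (L1m N ε (e t) * L2m N ε (e t))⁻¹ * Xm N M ε q e t *
            (L1m N ε (e t) * L2m N ε (e t)) ∧
      (Xm N M ε q e (t + M)).charpoly = (Xm N M ε q e t).charpoly := by
  have hX : ∀ s, Xm N M ε q e s
      = L1m N ε (e s) * L2m N ε (e s) * descProd (fun i => Rm N (q i)) s M :=
    fun s => foldl_range_mul_eq_mul_descProd (fun i => Rm N (q i)) s M _
  have hshift : L1m N ε (e (t + M)) * L2m N ε (e (t + M)) *
        descProd (fun i => Rm N (q i)) (t + M) M
      = descProd (fun i => Rm N (q i)) t M * (L1m N ε (e t) * L2m N ε (e t)) :=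
    mul_descProd_eq_descProd_mul (fun s => L1m N ε (e s) * L2m N ε (e s)) _ t M M
      fun s h₁ h₂ => hLax s h₁ (by omega)
  have hdet : IsUnit (L1m N ε (e t) * L2m N ε (e t)).det :=
    (isUnit_iff_isUnit_det _).mp ((isUnit_L1m N ε _).mul (isUnit_L2m N ε _))
  rw [hX, hX, hshift]
  exact ⟨by rw [nonsing_inv_mul_cancel_left _ _ hdet], charpoly_mul_comm _ _⟩
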